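/- Every HRRC instance in which each hospital's preference list has length at most 1 admits a strongly stable matching. -/

import Mathlib

/-- `a` is strictly preferred to `b` in the strictly ordered preference list `l`
(most preferred first). -/
def ListPref {α : Type*} [DecidableEq α] (l : List α) (a b : α) : Prop :=
  b ∈ l ∧ l.idxOf a < l.idxOf b

/-- An instance of the Hospitals/Residents problem with Regional Caps (HRRC):
residents `R`, hospitals `H`, strict preference lists on both sides,
hospital capacities `q`, a family `regions` of regions with regional caps `cap`. -/
structure HRRC (R H : Type*) where
  prefR : R → List H
  prefH : H → List R
  q : H → ℕ
  regions : Set (Finset H)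
  cap : Finset H → ℕ

namespace HRRC

variable {R H : Type*} [DecidableEq R] [DecidableEq H]

/-- Well-formedness: preference lists are strict (no repetitions), acceptability is
mutual, and regions are nonempty. -/
def WellFormed (I : HRRC R H) : Prop :=
  (∀ r, (I.prefR r).Nodup) ∧ (∀ h, (I.prefH h).Nodup) ∧
  (∀ r h, h ∈ I.prefR r ↔ r ∈ I.prefH h) ∧
  (∀ E ∈ I.regions, E.Nonempty)

/-- `M(h)`: the set of residents assigned to hospital `h`. -/
def assignedTo (M : Finset (R × H)) (h : H) : Finset R :=
  (M.filter fun p => p.2 = h).image Prod.fst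

/-- `M(E)`: the set of residents assigned to some hospital in the region `E`. -/
def assignedIn (M : Finset (R × H)) (E : Finset H) : Finset R :=
  (M.filter fun p => p.2 ∈ E).image Prod.fst

/-- `M` is a matching: pairs are mutually acceptable, each resident has at most one
hospital, and no hospital exceeds its capacity. -/
def IsMatching (I : HRRC R H) (M : Finset (R × H)) : Prop :=
  (∀ p ∈ M, p.2 ∈ I.prefR p.1 ∧ p.1 ∈ I.prefH p.2) ∧
  (∀ r h h', (r, h) ∈ M → (r, h') ∈ M → h = h') ∧
  (∀ h, (assignedTo M h).card ≤ I.q h)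

/-- Feasibility: all regional caps are respected. -/
def FeasibleCaps (I : HRRC R H) (M : Finset (R × H)) : Prop :=
  ∀ E ∈ I.regions, (assignedIn M E).card ≤ I.cap E

/-- `M \ {(r, M(r))} ∪ {(r, h)}`. -/
def move (M : Finset (R × H)) (r : R) (h : H) : Finset (R × H) :=
  (M.filter fun p => p.1 ≠ r) ∪ {(r, h)}

/-- `(r, h)` is a blocking pair for `M`. -/
def IsBlockingPair (I : HRRC R H) (M : Finset (R × H)) (r : R) (h : H) : Prop :=
  (r, h) ∉ M ∧ (h ∈ I.prefR r ∧ r ∈ I.prefH h) ∧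
  ((∀ h', (r, h') ∉ M) ∨ ∃ h', (r, h') ∈ M ∧ ListPref (I.prefR r) h h') ∧
  ((assignedTo M h).card < I.q h ∨ ∃ r' ∈ assignedTo M h, ListPref (I.prefH h) r r')

/-- `(r, h)` is a strong blocking pair for `M`. -/
def IsSBP (I : HRRC R H) (M : Finset (R × H)) (r : R) (h : H) : Prop :=
  I.IsBlockingPair M r h ∧
  (I.FeasibleCaps (move M r h) ∨ ∃ r' ∈ assignedTo M h, ListPref (I.prefH h) r r')

/-- `M` is a strongly stable matching of `I`. -/
def IsStronglyStable (I : HRRC R H) (M : Finset (R × H)) : Prop :=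
  I.IsMatching M ∧ I.FeasibleCaps M ∧ ∀ r h, ¬ I.IsSBP M r h

end HRRC


/-!
Since a hospital `h` finds at most one resident acceptable, it never prefers a resident
to one already in `M(h)`. A strong blocking pair `(r, h)` therefore only lets `r` take a
free seat at `h` in a feasible way; this improves `r` and changes nobody else. So a
feasible matching maximising the total satisfaction `∑ (length of r's list − rank of M(r))`
is strongly stable.
-/

theorem ListPref.one_lt_length {α : Type*} [DecidableEq α] {l : List α} {a b : α}
    (hab : ListPref l a b) : 1 < l.length := by
  have hb := List.idxOf_lt_length_of_mem hab.1
  have hidx := hab.2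
  omega

namespace HRRC

variable {R H : Type*} [DecidableEq R] [DecidableEq H]

theorem mem_assignedTo {M : Finset (R × H)} {r : R} {h : H} :
    r ∈ assignedTo M h ↔ (r, h) ∈ M := by
  simp [assignedTo]

theorem mem_move {M : Finset (R × H)} {r : R} {h : H} {p : R × H} :
    p ∈ move M r h ↔ (p ∈ M ∧ p.1 ≠ r) ∨ p = (r, h) := by
  simp [move, or_comm]

theorem assignedTo_move_subset (M : Finset (R × H)) (r : R) (h h' : H) :
    assignedTo (move M r h) h' ⊆ insert r (assignedTo M h') := by
  intro x hx
  rw [mem_assignedTo, mem_move] at hx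
  rcases hx with ⟨hx, -⟩ | hx
  · exact Finset.mem_insert_of_mem (mem_assignedTo.mpr hx)
  · exact Finset.mem_insert.mpr (Or.inl (Prod.mk.inj hx).1)

theorem assignedTo_move_subset_of_ne (M : Finset (R × H)) (r : R) {h h' : H} (hne : h' ≠ h) :
    assignedTo (move M r h) h' ⊆ assignedTo M h' := by
  intro x hx
  rw [mem_assignedTo, mem_move] at hx
  rcases hx with ⟨hx, -⟩ | hx
  · exact mem_assignedTo.mpr hx
  · exact absurd (Prod.mk.inj hx).2 hne

variable (I : HRRC R H)

theorem isMatching_empty : I.IsMatching ∅ :=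
  ⟨by simp, by simp, by simp [assignedTo]⟩

theorem feasibleCaps_empty : I.FeasibleCaps ∅ := by
  simp [FeasibleCaps, assignedIn]

variable {I}

theorem IsMatching.move {M : Finset (R × H)} {r : R} {h : H} (hM : I.IsMatching M)
    (hacc : h ∈ I.prefR r ∧ r ∈ I.prefH h) (hfree : (assignedTo M h).card < I.q h) :
    I.IsMatching (move M r h) := by
  obtain ⟨hMacc, hMfun, hMcap⟩ := hM
  refine ⟨fun p hp => ?_, fun a h₁ h₂ h₁M h₂M => ?_, fun h' => ?_⟩
  · rcases mem_move.mp hp with ⟨hp, -⟩ | rfl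
    exacts [hMacc p hp, hacc]
  · rcases mem_move.mp h₁M with ⟨h₁M, ha₁⟩ | h₁M <;>
      rcases mem_move.mp h₂M with ⟨h₂M, ha₂⟩ | h₂M
    · exact hMfun a h₁ h₂ h₁M h₂M
    · exact absurd (Prod.mk.inj h₂M).1 ha₁
    · exact absurd (Prod.mk.inj h₁M).1 ha₂
    · exact (Prod.mk.inj h₁M).2.trans (Prod.mk.inj h₂M).2.symm
  · by_cases hh' : h' = h
    · subst hh'
      calc (assignedTo (HRRC.move M r h') h').card
          ≤ (insert r (assignedTo M h')).card := Finset.card_le_card (assignedTo_move_subset ..)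
        _ ≤ (assignedTo M h').card + 1 := Finset.card_insert_le ..
        _ ≤ I.q h' := hfree
    · exact (Finset.card_le_card (assignedTo_move_subset_of_ne M r hh')).trans (hMcap h')

variable (I) in
def satisfaction (M : Finset (R × H)) : ℕ :=
  ∑ p ∈ M, ((I.prefR p.1).length - (I.prefR p.1).idxOf p.2)

theorem satisfaction_lt_move {M : Finset (R × H)} {r : R} {h : H}
    (hfun : ∀ r h h', (r, h) ∈ M → (r, h') ∈ M → h = h') (hh : h ∈ I.prefR r)
    (himp : (∀ h', (r, h') ∉ M) ∨ ∃ h', (r, h') ∈ M ∧ ListPref (I.prefR r) h h') :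
    I.satisfaction M < I.satisfaction (move M r h) := by
  set w : R × H → ℕ := fun p => (I.prefR p.1).length - (I.prefR p.1).idxOf p.2
  have hM : I.satisfaction M =
      ∑ p ∈ M.filter (·.1 ≠ r), w p + ∑ p ∈ M.filter (¬ ·.1 ≠ r), w p :=
    (Finset.sum_filter_add_sum_filter_not M _ w).symm
  have hmove : I.satisfaction (move M r h) = ∑ p ∈ M.filter (·.1 ≠ r), w p + w (r, h) :=
    Finset.sum_union (by simp) |>.trans (by rw [Finset.sum_singleton])
  have hh_lt := List.idxOf_lt_length_of_mem hh
  have hold : ∑ p ∈ M.filter (¬ ·.1 ≠ r), w p < w (r, h) := by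
    rcases himp with hun | ⟨h', hh'M, hpref⟩
    · have hempty : M.filter (¬ ·.1 ≠ r) = ∅ :=
        Finset.filter_eq_empty_iff.mpr fun ⟨a, b⟩ habM ha => hun b (not_not.mp ha ▸ habM)
      simp only [hempty, Finset.sum_empty, w]
      omega
    · have hsingle : M.filter (¬ ·.1 ≠ r) = {(r, h')} := by
        ext ⟨a, b⟩
        simp only [Finset.mem_filter, not_not, Finset.mem_singleton, Prod.mk.injEq]
        constructor
        · rintro ⟨habM, rfl⟩
          exact ⟨rfl, hfun a b h' habM hh'M⟩
        · rintro ⟨rfl, rfl⟩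
          exact ⟨hh'M, rfl⟩
      have hh'_lt := List.idxOf_lt_length_of_mem hpref.1
      simp only [hsingle, Finset.sum_singleton, w]
      have hidx := hpref.2
      omega
  omega

theorem IsSBP.move_improves {M : Finset (R × H)} {r : R} {h : H}
    (hh : (I.prefH h).length ≤ 1) (hM : I.IsMatching M) (hsbp : I.IsSBP M r h) :
    I.IsMatching (move M r h) ∧ I.FeasibleCaps (move M r h) ∧
      I.satisfaction M < I.satisfaction (move M r h) := by
  obtain ⟨⟨-, hacc, himp, hroom⟩, hfeas⟩ := hsbp
  have hnopref : ¬ ∃ r' ∈ assignedTo M h, ListPref (I.prefH h) r r' :=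
    fun ⟨_, _, hpref⟩ => absurd hh (not_le.mpr hpref.one_lt_length)
  exact ⟨hM.move hacc (hroom.resolve_right hnopref), hfeas.resolve_right hnopref,
    satisfaction_lt_move hM.2.1 hacc.1 himp⟩

theorem isStronglyStable_of_forall_satisfaction_le (hshort : ∀ h, (I.prefH h).length ≤ 1)
    {M : Finset (R × H)} (hM : I.IsMatching M) (hfeas : I.FeasibleCaps M)
    (hmax : ∀ M', I.IsMatching M' → I.FeasibleCaps M' → I.satisfaction M' ≤ I.satisfaction M) :
    I.IsStronglyStable M :=
  ⟨hM, hfeas, fun _ h hsbp =>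
    let ⟨hM', hfeas', hlt⟩ := hsbp.move_improves (hshort h) hM
    (hmax _ hM' hfeas').not_gt hlt⟩

variable (I) in
theorem exists_feasible_matching_maximizing_satisfaction [Fintype R] [Fintype H] :
    ∃ M, I.IsMatching M ∧ I.FeasibleCaps M ∧
      ∀ M', I.IsMatching M' → I.FeasibleCaps M' → I.satisfaction M' ≤ I.satisfaction M := by
  classical
  obtain ⟨M, hM, hmax⟩ :=
    (Finset.univ.filter fun M => I.IsMatching M ∧ I.FeasibleCaps M).exists_max_image
      I.satisfaction ⟨∅, by simp [isMatching_empty, feasibleCaps_empty]⟩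
  simp only [Finset.mem_filter, Finset.mem_univ, true_and] at hM hmax
  exact ⟨M, hM.1, hM.2, fun M' hM' hfeas' => hmax M' ⟨hM', hfeas'⟩⟩

end HRRC

theorem every_short_hospital_list_HRRC_has_strongly_stable_matching_general
    {R H : Type*} [DecidableEq R] [DecidableEq H] [Fintype R] [Fintype H]
    (I : HRRC R H)
    (hβ : ∀ h, (I.prefH h).length ≤ 1) :
    ∃ M : Finset (R × H), I.IsStronglyStable M := by
  obtain ⟨M, hM, hfeas, hmax⟩ := I.exists_feasible_matching_maximizing_satisfaction
  exact ⟨M, I.isStronglyStable_of_forall_satisfaction_le hβ hM hfeas hmax⟩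

/-- Every HRRC instance in which each hospital's preference list has length at most 1
admits a strongly stable matching. -/
theorem every_short_hospital_list_HRRC_has_strongly_stable_matching
    {R H : Type*} [DecidableEq R] [DecidableEq H] [Fintype R] [Fintype H]
    (I : HRRC R H) (hwf : I.WellFormed)
    (hβ : ∀ h, (I.prefH h).length ≤ 1) :
    ∃ M : Finset (R × H), I.IsStronglyStable M :=
  every_short_hospital_list_HRRC_has_strongly_stable_matching_general I hβ
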